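/- Under the hypotheses of the previous statement (F entire with an m-fold zero structure of F − 2cos(πt₀) at λ₀, sin(πt₀) ≠ 0, and F(λ(t)) = 2cos(πt) with λ(t) → λ₀), one has |F'(λ(t))| ∼ |t − t₀|^{(m−1)/m} as t → t₀. -/

import Mathlib

/-!
Near `λ₀`, both `F - F λ₀` and `F'` are analytic with orders `m` and `m - 1`, so they are
`Θ((λ - λ₀)^m)` and `Θ((λ - λ₀)^(m-1))`; likewise `2 cos (π t) - 2 cos (π t₀) = Θ(t - t₀)`
because `sin (π t₀) ≠ 0`. Along the curve `F (λ t) = 2 cos (π t)` this gives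
`|λ t - λ₀|^m ≍ |t - t₀|`, and hence `|F' (λ t)| ≍ |λ t - λ₀|^(m-1) ≍ |t - t₀|^((m-1)/m)`.
-/

open Filter Asymptotics Topology

lemma ContinuousAt.isTheta_one {α E 𝕜 : Type*} [TopologicalSpace α] [NormedAddCommGroup E]
    [NormedField 𝕜] {g : α → E} {x : α} (hg : ContinuousAt g x) (hgx : g x ≠ 0) :
    g =Θ[𝓝 x] fun _ => (1 : 𝕜) := by
  refine ⟨hg.tendsto.isBigO_one 𝕜, (isBigO_const_left_iff_pos_le_norm one_ne_zero).mpr ?_⟩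
  exact ⟨‖g x‖ / 2, by positivity,
    hg.norm.eventually (le_mem_nhds (half_lt_self (norm_pos_iff.mpr hgx)))⟩

section
variable {𝕜 E : Type*} [NontriviallyNormedField 𝕜] [NormedAddCommGroup E] [NormedSpace 𝕜 E]
  {f : 𝕜 → E} {z₀ : 𝕜} {n : ℕ}

lemma AnalyticAt.isTheta_sub_pow_of_analyticOrderAt_eq (hf : AnalyticAt 𝕜 f z₀)
    (h : analyticOrderAt f z₀ = n) :
    f =Θ[𝓝 z₀] fun z => (z - z₀) ^ n := by
  obtain ⟨g, hg, hg₀, hfg⟩ := hf.analyticOrderAt_eq_natCast.mp h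
  have hg1 : g =Θ[𝓝 z₀] fun _ => (1 : 𝕜) := hg.continuousAt.isTheta_one hg₀
  have hsmul := (isTheta_refl (fun z => (z - z₀) ^ n) (𝓝 z₀)).smul hg1
  exact (show f =ᶠ[𝓝 z₀] _ from hfg).trans_isTheta (by simpa using hsmul)

lemma AnalyticAt.analyticOrderAt_eq_natCast_of_iteratedDeriv [CharZero 𝕜] [CompleteSpace E]
    (hf : AnalyticAt 𝕜 f z₀) (hzero : ∀ i < n, iteratedDeriv i f z₀ = 0)
    (hne : iteratedDeriv n f z₀ ≠ 0) : analyticOrderAt f z₀ = n := by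
  have hle : (n : ℕ∞) ≤ analyticOrderAt f z₀ :=
    (natCast_le_analyticOrderAt_iff_iteratedDeriv_eq_zero hf).mpr hzero
  have hlt : ¬ ((n + 1 : ℕ) : ℕ∞) ≤ analyticOrderAt f z₀ := fun h =>
    hne ((natCast_le_analyticOrderAt_iff_iteratedDeriv_eq_zero hf).mp h n n.lt_succ_self)
  push_cast at hlt
  exact le_antisymm (Order.le_of_lt_add_one (not_le.mp hlt)) hle
end

lemma Asymptotics.IsTheta.comp_tendsto {α β E F : Type*} [Norm E] [Norm F] {l : Filter α}
    {f : α → E} {g : α → F} (h : f =Θ[l] g) {k : β → α} {l' : Filter β} (hk : Tendsto k l' l) :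
    (f ∘ k) =Θ[l'] (g ∘ k) :=
  ⟨h.1.comp_tendsto hk, h.2.comp_tendsto hk⟩

lemma Asymptotics.IsTheta.exists_bounds {α E F : Type*} [SeminormedAddCommGroup E]
    [SeminormedAddCommGroup F] {l : Filter α} {f : α → E} {g : α → F} (h : f =Θ[l] g) :
    ∃ c C : ℝ, 0 < c ∧ c ≤ C ∧ ∀ᶠ x in l, c * ‖g x‖ ≤ ‖f x‖ ∧ ‖f x‖ ≤ C * ‖g x‖ := by
  obtain ⟨C, hC, hfg⟩ := h.1.exists_pos
  obtain ⟨c, hc, hgf⟩ := h.2.exists_pos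
  refine ⟨c⁻¹, max C c⁻¹, inv_pos.mpr hc, le_max_right _ _, ?_⟩
  filter_upwards [hfg.bound, hgf.bound] with x hup hlow
  constructor
  · rwa [inv_mul_le_iff₀ hc]
  · exact hup.trans (by gcongr; exact le_max_left _ _)

lemma Asymptotics.IsTheta.pow_pred_of_pow {α 𝕜 𝕜' : Type*} [NormedField 𝕜]
    [NormedField 𝕜'] {l : Filter α} {u : α → 𝕜} {v : α → 𝕜'} {m : ℕ} (hm : 1 ≤ m)
    (h : (fun x => u x ^ m) =Θ[l] v) :
    (fun x => u x ^ (m - 1)) =Θ[l] fun x => ‖v x‖ ^ (((m : ℝ) - 1) / m) := by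
  have hr := h.norm_left.norm_right.rpow (r := ((m : ℝ) - 1) / m)
    (Eventually.of_forall fun _ => norm_nonneg _) (Eventually.of_forall fun _ => norm_nonneg _)
  have hm0 : (m : ℝ) ≠ 0 := by positivity
  have hpow : (fun x => ‖u x ^ m‖ ^ (((m : ℝ) - 1) / m)) = fun x => ‖u x ^ (m - 1)‖ := by
    ext x
    rw [norm_pow, norm_pow, ← Real.rpow_natCast, ← Real.rpow_mul (norm_nonneg _),
      mul_div_cancel₀ _ hm0, ← Real.rpow_natCast, Nat.cast_sub hm, Nat.cast_one]
  exact (hpow ▸ hr).of_norm_left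

theorem stmt12_general (F : ℂ → ℂ) (hF : Differentiable ℂ F) (lam₀ t₀ : ℂ) (m : ℕ) (hm : 1 ≤ m)
    (hval : F lam₀ = 2 * Complex.cos ((Real.pi : ℂ) * t₀))
    (hzero : ∀ k : ℕ, 1 ≤ k → k ≤ m - 1 → iteratedDeriv k F lam₀ = 0)
    (hne : iteratedDeriv m F lam₀ ≠ 0)
    (hsin : Complex.sin ((Real.pi : ℂ) * t₀) ≠ 0)
    (lam : ℂ → ℂ) (U : Set ℂ) (hU : U ∈ nhds t₀)
    (hlim : Tendsto lam (nhdsWithin t₀ {t₀}ᶜ) (nhds lam₀))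
    (heq : ∀ t ∈ U \ {t₀}, F (lam t) = 2 * Complex.cos ((Real.pi : ℂ) * t)) :
    ∃ c C : ℝ, 0 < c ∧ c ≤ C ∧
      ∀ᶠ t in nhdsWithin t₀ {t₀}ᶜ,
        c * ‖t - t₀‖ ^ (((m : ℝ) - 1) / m) ≤ ‖deriv F (lam t)‖ ∧
        ‖deriv F (lam t)‖ ≤ C * ‖t - t₀‖ ^ (((m : ℝ) - 1) / m) := by
  have hFa : AnalyticAt ℂ F lam₀ := hF.analyticAt lam₀
  have hcosa : AnalyticAt ℂ (fun t => 2 * Complex.cos ((Real.pi : ℂ) * t)) t₀ := by fun_prop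
  have hF' : analyticOrderAt (deriv F) lam₀ = (m - 1 : ℕ) :=
    hFa.deriv.analyticOrderAt_eq_natCast_of_iteratedDeriv
      (fun i hi => by rw [← iteratedDeriv_succ']; exact hzero _ (by omega) (by omega))
      (by rwa [← iteratedDeriv_succ', Nat.sub_add_cancel hm])
  have hFc : analyticOrderAt (F · - F lam₀) lam₀ = m := by
    rw [← hFa.analyticOrderAt_deriv_add_one, hF']
    exact_mod_cast Nat.sub_add_cancel hm
  have hcos : analyticOrderAt (fun t => 2 * Complex.cos ((Real.pi : ℂ) * t) -
      2 * Complex.cos ((Real.pi : ℂ) * t₀)) t₀ = (1 : ℕ) :=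
    hcosa.analyticOrderAt_sub_eq_one_of_deriv_ne_zero <| by
      rw [(((hasDerivAt_id' t₀).const_mul (Real.pi : ℂ)).ccos.const_mul 2).deriv]
      simp [hsin, Real.pi_ne_zero]
  have hlam : (fun t => (lam t - lam₀) ^ m) =Θ[𝓝[≠] t₀] fun t => (t - t₀) ^ 1 := by
    have hcurve : (fun t => F (lam t) - F lam₀) =ᶠ[𝓝[≠] t₀]
        fun t => 2 * Complex.cos ((Real.pi : ℂ) * t) - 2 * Complex.cos ((Real.pi : ℂ) * t₀) := by
      filter_upwards [mem_nhdsWithin_of_mem_nhds hU, self_mem_nhdsWithin] with t htU ht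
      rw [heq t ⟨htU, ht⟩, hval]
    have hFlam := (hFa.fun_sub analyticAt_const).isTheta_sub_pow_of_analyticOrderAt_eq hFc
    have hcost := (hcosa.fun_sub analyticAt_const).isTheta_sub_pow_of_analyticOrderAt_eq hcos
    exact (hFlam.comp_tendsto hlim).symm.trans
      (hcurve.trans_isTheta (hcost.mono nhdsWithin_le_nhds))
  have hderiv := hFa.deriv.isTheta_sub_pow_of_analyticOrderAt_eq hF'
  obtain ⟨c, C, hc, hcC, hbounds⟩ :=
    ((hderiv.comp_tendsto hlim).trans (hlam.pow_pred_of_pow hm)).exists_bounds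
  refine ⟨c, C, hc, hcC, ?_⟩
  filter_upwards [hbounds] with t ht
  simpa [Real.norm_of_nonneg (by positivity : (0 : ℝ) ≤ ‖t - t₀‖ ^ (((m : ℝ) - 1) / m))] using ht

/-- Under the hypotheses of the previous statement (`F` entire with an `m`-fold
zero structure of `F − 2cos(πt₀)` at `λ₀`, `sin(πt₀) ≠ 0`, `F(λ(t)) = 2cos(πt)`
with `λ(t) → λ₀`), one has `|F'(λ(t))| ∼ |t − t₀|^{(m−1)/m}` as `t → t₀`. -/
theorem stmt12 (F : ℂ → ℂ) (hF : Differentiable ℂ F) (lam₀ t₀ : ℂ) (m : ℕ) (hm : 1 ≤ m)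
    (hval : F lam₀ = 2 * Complex.cos ((Real.pi : ℂ) * t₀))
    (hzero : ∀ k : ℕ, 1 ≤ k → k ≤ m - 1 → iteratedDeriv k F lam₀ = 0)
    (hne : iteratedDeriv m F lam₀ ≠ 0)
    (hsin : Complex.sin ((Real.pi : ℂ) * t₀) ≠ 0)
    (lam : ℂ → ℂ) (U : Set ℂ) (hU : U ∈ nhds t₀)
    (hcont : ContinuousOn lam (U \ {t₀}))
    (hlim : Tendsto lam (nhdsWithin t₀ {t₀}ᶜ) (nhds lam₀))
    (heq : ∀ t ∈ U \ {t₀}, F (lam t) = 2 * Complex.cos ((Real.pi : ℂ) * t)) :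
    ∃ c C : ℝ, 0 < c ∧ c ≤ C ∧
      ∀ᶠ t in nhdsWithin t₀ {t₀}ᶜ,
        c * ‖t - t₀‖ ^ (((m : ℝ) - 1) / m) ≤ ‖deriv F (lam t)‖ ∧
        ‖deriv F (lam t)‖ ≤ C * ‖t - t₀‖ ^ (((m : ℝ) - 1) / m) :=
  stmt12_general F hF lam₀ t₀ m hm hval hzero hne hsin lam U hU hlim heq
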